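/- For any compact set X ⊂ ℝᵈ, the map μ ↦ reach_μ(X) is non-increasing on (0,1] and reach₁(X) = reach(X). -/
import Mathlib


open Metric

variable {d : ℕ}

/-- Set of closest points of `X` to `x`. -/
def closestPoints (X : Set (EuclideanSpace ℝ (Fin d)))
    (x : EuclideanSpace ℝ (Fin d)) : Set (EuclideanSpace ℝ (Fin d)) :=
  {z ∈ X | ‖z - x‖ = Metric.infDist x X}

/-- Clarke gradient of the distance function to `X` at `x ∉ X`. -/
noncomputable def clarkeGrad (X : Set (EuclideanSpace ℝ (Fin d)))
    (x : EuclideanSpace ℝ (Fin d)) : Set (EuclideanSpace ℝ (Fin d)) :=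
  convexHull ℝ ((fun z => ‖x - z‖⁻¹ • (x - z)) '' closestPoints X x)

/-- `Δ(S)`: infimum of norms of elements of `S`. -/
noncomputable def Delta (S : Set (EuclideanSpace ℝ (Fin d))) : ℝ :=
  sInf ((fun u => ‖u‖) '' S)

/-- The reach of `X`. -/
noncomputable def reach (X : Set (EuclideanSpace ℝ (Fin d))) : ENNReal :=
  sSup {t : ENNReal | 0 < t ∧ ∀ x, 0 < ENNReal.ofReal (Metric.infDist x X) →
    ENNReal.ofReal (Metric.infDist x X) < t → ∃! z, z ∈ closestPoints X x}

/-- The `μ`-reach of `X`. -/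
noncomputable def reachMu (X : Set (EuclideanSpace ℝ (Fin d))) (μ : ℝ) : ENNReal :=
  sSup {t : ENNReal | 0 < t ∧ ∀ x, 0 < ENNReal.ofReal (Metric.infDist x X) →
    ENNReal.ofReal (Metric.infDist x X) < t → μ ≤ Delta (clarkeGrad X x)}

lemma norm_unit {X : Set (EuclideanSpace ℝ (Fin d))} {x z : EuclideanSpace ℝ (Fin d)}
    (h : 0 < Metric.infDist x X) (hz : z ∈ closestPoints X x) :
    ‖‖x - z‖⁻¹ • (x - z)‖ = 1 := by
  have hxz : ‖x - z‖ = Metric.infDist x X := by rw [← hz.2, norm_sub_rev]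
  have hpos : 0 < ‖x - z‖ := hxz ▸ h
  rw [norm_smul, norm_inv, norm_norm, inv_mul_cancel₀ hpos.ne']

lemma key (X : Set (EuclideanSpace ℝ (Fin d))) (hX : IsCompact X)
    (x : EuclideanSpace ℝ (Fin d)) (h : 0 < Metric.infDist x X) :
    (∃! z, z ∈ closestPoints X x) ↔ 1 ≤ Delta (clarkeGrad X x) := by
  constructor
  · rintro ⟨z, hz, huniq⟩
    have hset : closestPoints X x = {z} := by
      ext w; exact ⟨fun hw => huniq w hw, fun hw => hw ▸ hz⟩
    have : clarkeGrad X x = {‖x - z‖⁻¹ • (x - z)} := by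
      rw [clarkeGrad, hset, Set.image_singleton, convexHull_singleton]
    rw [Delta, this, Set.image_singleton, csInf_singleton, norm_unit h hz]
  · intro hD
    -- X is nonempty
    have hXne : X.Nonempty := by
      by_contra hne
      rw [Set.not_nonempty_iff_eq_empty] at hne
      rw [hne, Metric.infDist_empty] at h
      exact lt_irrefl 0 h
    obtain ⟨z, hzX, hzd⟩ := hX.exists_infDist_eq_dist hXne x
    have hz : z ∈ closestPoints X x := ⟨hzX, by rw [hzd, dist_comm, dist_eq_norm]⟩
    refine ⟨z, hz, fun w hw => ?_⟩
    by_contra hwz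
    -- two distinct closest points give midpoint of norm < 1
    set u := ‖x - w‖⁻¹ • (x - w) with hu
    set v := ‖x - z‖⁻¹ • (x - z) with hv
    have hnu : ‖u‖ = 1 := norm_unit h hw
    have hnv : ‖v‖ = 1 := norm_unit h hz
    have hd : ‖x - w‖ = ‖x - z‖ := by
      rw [norm_sub_rev, hw.2, norm_sub_rev x z, hz.2]
    have hpos : 0 < ‖x - z‖ := by
      rw [norm_sub_rev, hz.2]; exact h
    have huv : u ≠ v := by
      intro he
      apply hwz
      have : (x - w) = (x - z) := by
        have := congrArg (fun t => ‖x - z‖ • t) he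
        simpa [hu, hv, hd, smul_smul, mul_inv_cancel₀ hpos.ne'] using this
      exact sub_right_injective this
    have hmid : (2 : ℝ)⁻¹ • u + (2 : ℝ)⁻¹ • v ∈ clarkeGrad X x := by
      have h1 : u ∈ clarkeGrad X x := subset_convexHull ℝ _ ⟨w, hw, rfl⟩
      have h2 : v ∈ clarkeGrad X x := subset_convexHull ℝ _ ⟨z, hz, rfl⟩
      exact (convex_convexHull ℝ _) h1 h2 (by norm_num) (by norm_num) (by norm_num)
    have hlt : ‖(2 : ℝ)⁻¹ • u + (2 : ℝ)⁻¹ • v‖ < 1 := by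
      rw [← smul_add, norm_smul]
      have : ‖u + v‖ < 2 := by
        rcases lt_or_eq_of_le (norm_add_le u v) with hl | he
        · rw [hnu, hnv] at hl; linarith
        · exact absurd (eq_of_norm_eq_of_norm_add_eq (hnu.trans hnv.symm) (he)) huv
      rw [Real.norm_eq_abs]
      rw [abs_of_pos (by norm_num)]
      linarith
    have hle : Delta (clarkeGrad X x) ≤ ‖(2 : ℝ)⁻¹ • u + (2 : ℝ)⁻¹ • v‖ := by
      apply csInf_le
      · exact ⟨0, fun r hr => by obtain ⟨y, _, rfl⟩ := hr; exact norm_nonneg y⟩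
      · exact ⟨_, hmid, rfl⟩
    linarith

theorem stmt12 (X : Set (EuclideanSpace ℝ (Fin d))) (hX : IsCompact X) :
    (∀ μ₁ μ₂ : ℝ, 0 < μ₁ → μ₁ ≤ μ₂ → μ₂ ≤ 1 → reachMu X μ₂ ≤ reachMu X μ₁) ∧
      reachMu X 1 = reach X := by
  constructor
  · intro μ₁ μ₂ _ h12 _
    apply sSup_le_sSup
    rintro t ⟨ht, hcond⟩
    exact ⟨ht, fun x hx hxt => le_trans h12 (hcond x hx hxt)⟩
  · unfold reachMu reach
    congr 1
    ext t
    simp only [Set.mem_setOf_eq]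
    constructor
    · rintro ⟨ht, hc⟩
      refine ⟨ht, fun x hx hxt => ?_⟩
      have hpos : 0 < Metric.infDist x X := by
        by_contra hp
        push_neg at hp
        rw [ENNReal.ofReal_eq_zero.mpr hp] at hx
        exact lt_irrefl 0 hx
      exact (key X hX x hpos).mpr (hc x hx hxt)
    · rintro ⟨ht, hc⟩
      refine ⟨ht, fun x hx hxt => ?_⟩
      have hpos : 0 < Metric.infDist x X := by
        by_contra hp
        push_neg at hp
        rw [ENNReal.ofReal_eq_zero.mpr hp] at hx
        exact lt_irrefl 0 hx
      exact (key X hX x hpos).mp (hc x hx hxt)
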